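/- Let 0 < p < q < 2 and t > 0, and let r, s > 0 be defined by 1/p = 1/2 + 1/r and 1/q = 1/2 + 1/s. Define Φ_t^{(p,q)}(u) = min(u^p, t^q u^q) and Φ_t^{(r,s)}(u) = min(u^r, t^s u^s). Then for every u > 0, Φ_t^{(r,s)}( u · (Φ_t^{(p,q)}(u))^{-1/2} ) ≤ Φ_t^{(p,q)}(u). -/
import Mathlib

/-- Helper: if `1/a = 1/2 + 1/c` with `0 < a`, `0 < c`, then
`t^c * (u * (t^a * u^a)^(-1/2))^c = t^a * u^a`. -/
lemma stmt3_aux (a c t u : ℝ) (ha : 0 < a) (hc : 0 < c) (ht : 0 < t) (hu : 0 < u)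
    (hac : 1 / a = 1 / 2 + 1 / c) :
    t ^ c * (u * (t ^ a * u ^ a) ^ (-(1 / 2) : ℝ)) ^ c = t ^ a * u ^ a := by
  have key : (1 - a / 2) * c = a := by
    field_simp at hac
    nlinarith [hac]
  have h1 : (t ^ a * u ^ a) ^ (-(1 / 2) : ℝ)
      = t ^ (a * (-(1/2) : ℝ)) * u ^ (a * (-(1/2) : ℝ)) := by
    rw [Real.mul_rpow (Real.rpow_nonneg ht.le _) (Real.rpow_nonneg hu.le _),
      ← Real.rpow_mul ht.le, ← Real.rpow_mul hu.le]
  have h2 : u * (t ^ a * u ^ a) ^ (-(1 / 2) : ℝ)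
      = t ^ (a * (-(1/2) : ℝ)) * u ^ ((1 : ℝ) + a * (-(1/2) : ℝ)) := by
    rw [h1, Real.rpow_add hu, Real.rpow_one]; ring
  rw [h2, Real.mul_rpow (Real.rpow_nonneg ht.le _) (Real.rpow_nonneg hu.le _),
    ← Real.rpow_mul ht.le, ← Real.rpow_mul hu.le, ← mul_assoc, ← Real.rpow_add ht]
  have e1 : c + a * -(1/2) * c = a := by nlinarith [key]
  have e2 : (1 + a * -(1/2)) * c = a := by nlinarith [key]
  rw [e1, e2]

/-- For `0 < p < q < 2`, `t > 0`, and `r, s > 0` with `1/p = 1/2 + 1/r`,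
`1/q = 1/2 + 1/s`, setting `Φ_t^{(p,q)}(u) = min(u^p, t^q u^q)` and
`Φ_t^{(r,s)}(u) = min(u^r, t^s u^s)`, one has
`Φ_t^{(r,s)}(u · (Φ_t^{(p,q)}(u))^{-1/2}) ≤ Φ_t^{(p,q)}(u)` for every `u > 0`. -/
theorem stmt3 (p q r s t : ℝ) (hp : 0 < p) (hpq : p < q) (hq2 : q < 2) (ht : 0 < t)
    (hr : 0 < r) (hs : 0 < s)
    (hpr : 1 / p = 1 / 2 + 1 / r) (hqs : 1 / q = 1 / 2 + 1 / s)
    (u : ℝ) (hu : 0 < u) :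
    min ((u * (min (u ^ p) (t ^ q * u ^ q)) ^ (-(1 / 2) : ℝ)) ^ r)
        (t ^ s * (u * (min (u ^ p) (t ^ q * u ^ q)) ^ (-(1 / 2) : ℝ)) ^ s)
      ≤ min (u ^ p) (t ^ q * u ^ q) := by
  rcases le_total (u ^ p) (t ^ q * u ^ q) with h | h
  · rw [min_eq_left h]
    refine le_trans (min_le_left _ _) (le_of_eq ?_)
    have := stmt3_aux p r 1 u hp hr one_pos hu hpr
    simpa using this
  · rw [min_eq_right h]
    refine le_trans (min_le_right _ _) (le_of_eq ?_)
    exact stmt3_aux q s t u (hp.trans hpq) hs ht hu hqs
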